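/- Let d ≥ 3, δ = ⌊d/2⌋, and let n ≥ d be an integer. Let g_0, …, g_δ be integers with g_0 = 1 and g_i ≥ C(d,i) − C(d,i−1) for all 1 ≤ i ≤ δ, and define f_j = Σ_{i=0}^{δ} g_i·m_{i,j} for 0 ≤ j ≤ d−1. Let gCS_0 = 1, gCS_1 = 2n−d−1, and gCS_i = C(d,i) − C(d,i−1) for 2 ≤ i ≤ δ, and define fCS_j = Σ_{i=0}^{δ} gCS_i·m_{i,j}. If fCS_r ≤ f_r for some integer r with 0 ≤ r ≤ d−2, then fCS_s ≤ f_s for every integer s with r < s ≤ d−1. -/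

import Mathlib

/-!
Put `c_i = g_i - gCS_i`, so that `f_j - fCS_j = ∑ c_i m_{i,j}` with `c_0 = 0` and `c_i ≥ 0` for
`i ≥ 2`, while `c_1` may have either sign. As `m_{1,j} > 0` for `j ≤ d - 2`, it suffices that
`(f_j - fCS_j) / m_{1,j} = c_1 + ∑_{i ≥ 2} c_i m_{i,j} / m_{1,j}` is nondecreasing in `j`, i.e. that
every ratio `m_{i,j} / m_{1,j}` with `2 ≤ i ≤ d/2` is. Writing `A = d + 1 - i` and `t = d - j - 1`
and clearing the factor `t + 1` with `(t + 1) C(n, t + 1) = (n - t) C(n, t)`, this becomes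
`(A - 1) C(i, t) ≤ (i - 1) C(A, t)` for `t ≥ 2`, which holds because
`C(n, t) / (n - 1) = n C(n - 2, t - 2) / (t (t - 1))` increases with `n`; for `t = 1` the two
ratios are equal.
-/

/-- The entry `m_{i,j} = C(d+1-i, d-j) - C(i, d-j)` of the matrix `M_d`. -/
def mMat (d i j : ℕ) : ℤ :=
  ((d + 1 - i).choose (d - j) : ℤ) - (i.choose (d - j) : ℤ)

/-- The g-vector of the centrally-symmetric stacked polytope `CS(2n,d)`:
`gCS_0 = 1`, `gCS_1 = 2n-d-1`, and `gCS_i = C(d,i) - C(d,i-1)` for `i ≥ 2`. -/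
def gCSStacked (n d i : ℕ) : ℤ :=
  if i = 0 then 1
  else if i = 1 then 2 * (n : ℤ) - d - 1
  else (d.choose i : ℤ) - (d.choose (i - 1) : ℤ)

theorem intCast_choose_succ_mul (n k : ℕ) :
    (n.choose (k + 1) : ℤ) * (k + 1) = n.choose k * (n - k) := by
  rcases le_or_gt k n with h | h
  · exact_mod_cast Nat.choose_succ_right_eq n k
  · simp [Nat.choose_eq_zero_of_lt h, Nat.choose_eq_zero_of_lt (h.trans k.lt_succ_self)]

theorem succ_mul_choose_add_two_le {a b : ℕ} (hab : a ≤ b) (t : ℕ) :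
    (b + 1) * (a + 2).choose (t + 2) ≤ (a + 1) * (b + 2).choose (t + 2) := by
  have expand (n : ℕ) : (n + 2).choose (t + 2) * ((t + 2) * (t + 1)) =
      (n + 2) * (n + 1) * n.choose t := by
    rw [← mul_assoc, ← Nat.add_one_mul_choose_eq, mul_assoc, ← Nat.add_one_mul_choose_eq]
    ring
  refine Nat.le_of_mul_le_mul_right ?_ (by positivity : 0 < (t + 2) * (t + 1))
  calc (b + 1) * (a + 2).choose (t + 2) * ((t + 2) * (t + 1))
      = (b + 1) * (a + 1) * ((a + 2) * a.choose t) := by rw [mul_assoc, expand]; ring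
    _ ≤ (b + 1) * (a + 1) * ((b + 2) * b.choose t) :=
        Nat.mul_le_mul_left _ (Nat.mul_le_mul (by omega) (Nat.choose_le_choose t hab))
    _ = (a + 1) * (b + 2).choose (t + 2) * ((t + 2) * (t + 1)) := by
        rw [mul_assoc (a + 1), expand]; ring

theorem choose_sub_choose_cross_le {A i d t : ℕ} (hAi : A + i = d + 1) (hi : 2 ≤ i) (hiA : i ≤ A)
    (ht : 1 ≤ t) :
    ((A.choose (t + 1) : ℤ) - i.choose (t + 1)) * (d.choose t - (1 : ℕ).choose t) ≤
      ((A.choose t : ℤ) - i.choose t) * (d.choose (t + 1) - (1 : ℕ).choose (t + 1)) := by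
  have hd : (d : ℤ) = A + i - 1 := by omega
  rw [Nat.choose_eq_zero_of_lt (by omega : 1 < t + 1), Nat.cast_zero, sub_zero]
  obtain rfl | ht := ht.eq_or_lt
  · have hA := intCast_choose_succ_mul A 1
    have hi := intCast_choose_succ_mul i 1
    have hd2 := intCast_choose_succ_mul d 1
    simp only [Nat.choose_one_right, Nat.choose_self, Nat.cast_one] at hA hi hd2 ⊢
    refine le_of_eq (mul_left_cancel₀ (two_ne_zero' ℤ) ?_)
    linear_combination (↑d - 1) * hA - (↑d - 1) * hi - (↑A - ↑i) * hd2 - (↑A - ↑i) * (↑d - 1) * hd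
  · have hmono : ((A : ℤ) - 1) * i.choose t ≤ ((i : ℤ) - 1) * A.choose t := by
      obtain ⟨a, rfl⟩ : ∃ a, i = a + 2 := ⟨i - 2, by omega⟩
      obtain ⟨b, rfl⟩ : ∃ b, A = b + 2 := ⟨A - 2, by omega⟩
      obtain ⟨u, rfl⟩ : ∃ u, t = u + 2 := ⟨t - 2, by omega⟩
      have h := (Nat.cast_le (α := ℤ)).2 (succ_mul_choose_add_two_le (by omega : a ≤ b) u)
      push_cast at h ⊢
      linarith
    have hcd : (0 : ℤ) ≤ d.choose t * (((i : ℤ) - 1) * A.choose t - ((A : ℤ) - 1) * i.choose t) :=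
      mul_nonneg (by positivity) (sub_nonneg.2 hmono)
    rw [Nat.choose_eq_zero_of_lt ht, Nat.cast_zero, sub_zero]
    refine le_of_mul_le_mul_left ?_ (by positivity : (0 : ℤ) < t + 1)
    linear_combination hcd + (d.choose t : ℤ) * intCast_choose_succ_mul A t
      - (d.choose t : ℤ) * intCast_choose_succ_mul i t
      - ((A.choose t : ℤ) - i.choose t) * intCast_choose_succ_mul d t
      - (d.choose t : ℤ) * ((A.choose t : ℤ) - i.choose t) * hd

theorem mMat_nonneg {d i : ℕ} (hi : 2 * i ≤ d + 1) (j : ℕ) : 0 ≤ mMat d i j :=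
  sub_nonneg.2 (by exact_mod_cast Nat.choose_le_choose _ (by omega))

theorem mMat_one_pos {d j : ℕ} (hj : j + 1 < d) : 0 < mMat d 1 j := by
  rw [mMat, Nat.add_sub_cancel, Nat.choose_eq_zero_of_lt (by omega : 1 < d - j), Nat.cast_zero,
    sub_zero]
  exact_mod_cast Nat.choose_pos (by omega)

theorem mMat_mul_mMat_one_le {d i j : ℕ} (hi : 2 ≤ i) (hid : 2 * i ≤ d + 1) (hj : j + 2 ≤ d) :
    mMat d i j * mMat d 1 (j + 1) ≤ mMat d i (j + 1) * mMat d 1 j := by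
  obtain ⟨t, ht⟩ : ∃ t, d - (j + 1) = t := ⟨_, rfl⟩
  have hA : d + 1 - i + i = d + 1 := by omega
  unfold mMat
  rw [ht, show d - j = t + 1 by omega, Nat.add_sub_cancel]
  exact choose_sub_choose_cross_le hA hi (by omega) (by omega)

theorem gCSStacked_of_two_le {n d i : ℕ} (hi : 2 ≤ i) :
    gCSStacked n d i = (d.choose i : ℤ) - d.choose (i - 1) := by
  rw [gCSStacked, if_neg (by omega), if_neg (by omega)]

theorem Finset.sum_mul_nonneg_of_cross_le {ι R : Type*} [CommRing R] [LinearOrder R]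
    [IsStrictOrderedRing R] {s : Finset ι} {c a b : ι → R} {k : ι} (hak : 0 < a k)
    (hbk : 0 ≤ b k) (hcross : ∀ i ∈ s, c i * a i * b k ≤ c i * b i * a k)
    (hsum : 0 ≤ ∑ i ∈ s, c i * a i) : 0 ≤ ∑ i ∈ s, c i * b i := by
  have h : (∑ i ∈ s, c i * a i) * b k ≤ (∑ i ∈ s, c i * b i) * a k := by
    simp only [Finset.sum_mul]
    exact Finset.sum_le_sum hcross
  exact nonneg_of_mul_nonneg_left ((mul_nonneg hsum hbk).trans h) hak

theorem sum_mul_mMat_succ_nonneg {d j : ℕ} {c : ℕ → ℤ} (hc0 : c 0 = 0)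
    (hc : ∀ i, 2 ≤ i → i ≤ d / 2 → 0 ≤ c i) (hj : j + 2 ≤ d)
    (h : 0 ≤ ∑ i ∈ Finset.range (d / 2 + 1), c i * mMat d i j) :
    0 ≤ ∑ i ∈ Finset.range (d / 2 + 1), c i * mMat d i (j + 1) := by
  refine Finset.sum_mul_nonneg_of_cross_le (a := fun i => mMat d i j)
    (b := fun i => mMat d i (j + 1)) (mMat_one_pos (by omega)) (mMat_nonneg (by omega) _)
    (fun i hi => ?_) h
  rw [Finset.mem_range] at hi
  rcases (by omega : i = 0 ∨ i = 1 ∨ 2 ≤ i) with rfl | rfl | hi2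
  · simp [hc0]
  · exact (mul_right_comm _ _ _).le
  · rw [mul_assoc, mul_assoc]
    exact mul_le_mul_of_nonneg_left (mMat_mul_mMat_one_le hi2 (by omega) hj) (hc i hi2 (by omega))

theorem sum_mul_mMat_nonneg_of_le {d r s : ℕ} {c : ℕ → ℤ} (hc0 : c 0 = 0)
    (hc : ∀ i, 2 ≤ i → i ≤ d / 2 → 0 ≤ c i) (hrs : r ≤ s) (hs : s < d)
    (h : 0 ≤ ∑ i ∈ Finset.range (d / 2 + 1), c i * mMat d i r) :
    0 ≤ ∑ i ∈ Finset.range (d / 2 + 1), c i * mMat d i s := by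
  induction s, hrs using Nat.le_induction with
  | base => exact h
  | succ s _ ih => exact sum_mul_mMat_succ_nonneg hc0 hc (by omega) (ih (by omega))

theorem cs_lower_bounds_general (d n : ℕ) (g : ℕ → ℤ)
    (hg0 : g 0 = 1)
    (hg : ∀ i, 1 ≤ i → i ≤ d / 2 → (d.choose i : ℤ) - (d.choose (i - 1) : ℤ) ≤ g i)
    (r : ℕ)
    (hfr : ∑ i ∈ Finset.range (d / 2 + 1), gCSStacked n d i * mMat d i r ≤
           ∑ i ∈ Finset.range (d / 2 + 1), g i * mMat d i r) :
    ∀ s, r < s → s ≤ d - 1 →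
      ∑ i ∈ Finset.range (d / 2 + 1), gCSStacked n d i * mMat d i s ≤
        ∑ i ∈ Finset.range (d / 2 + 1), g i * mMat d i s := by
  intro s hrs hs
  have hc0 : g 0 - gCSStacked n d 0 = 0 := by simp [hg0, gCSStacked]
  have hc : ∀ i, 2 ≤ i → i ≤ d / 2 → 0 ≤ g i - gCSStacked n d i := fun i hi hid => by
    rw [gCSStacked_of_two_le hi]
    linarith [hg i (by omega) hid]
  rw [← sub_nonneg, ← Finset.sum_sub_distrib] at hfr ⊢
  simp only [← sub_mul] at hfr ⊢
  exact sum_mul_mMat_nonneg_of_le hc0 hc hrs.le (by omega) hfr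

/-- Centrally-symmetric lower bounds: if `g_0 = 1` and `g_i ≥ C(d,i) - C(d,i-1)` for
`1 ≤ i ≤ ⌊d/2⌋`, `f = g·M_d`, and `fCS = gCS·M_d` is the f-vector of the
centrally-symmetric stacked polytope `CS(2n,d)`, then `fCS_r ≤ f_r` for some `r ≤ d-2`
implies `fCS_s ≤ f_s` for all `r < s ≤ d-1`. -/
theorem cs_lower_bounds (d n : ℕ) (hd : 3 ≤ d) (hn : d ≤ n) (g : ℕ → ℤ)
    (hg0 : g 0 = 1)
    (hg : ∀ i, 1 ≤ i → i ≤ d / 2 → (d.choose i : ℤ) - (d.choose (i - 1) : ℤ) ≤ g i)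
    (r : ℕ) (hr : r ≤ d - 2)
    (hfr : ∑ i ∈ Finset.range (d / 2 + 1), gCSStacked n d i * mMat d i r ≤
           ∑ i ∈ Finset.range (d / 2 + 1), g i * mMat d i r) :
    ∀ s, r < s → s ≤ d - 1 →
      ∑ i ∈ Finset.range (d / 2 + 1), gCSStacked n d i * mMat d i s ≤
        ∑ i ∈ Finset.range (d / 2 + 1), g i * mMat d i s :=
  cs_lower_bounds_general d n g hg0 hg r hfr
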